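/- arXiv:1209.6500 — 7 statements merged into one kernel-verified Lean document; each statement's English description precedes it below -/
import Mathlib

section
/- Let $Q$ be an $\mathbb{N}^*\setminus Q$-free set. Then for every $\nu>0$, $\sum_{\pi\in\mathrm{Supp}(Q)} \pi^{-\nu} \le \sum_{q\in Q} q^{-\nu} \le \sum_{n\in\mathcal{C}(\mathrm{Supp}(Q))} n^{-\nu}$, and consequently the exponent of convergence $\nu(Q)$ depends only on $\mathrm{Supp}(Q)$: $\sum_{q\in Q} q^{-\nu}$ converges if and only if $\sum_{\pi\in\mathrm{Supp}(Q)} \pi^{-\nu}$ converges. -/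
/-!
Every prime dividing an element of `Q` lies in `Q`, so `Supp(Q) ⊆ Q ⊆ 𝒞(Supp(Q))`, which gives
both inequalities and one direction of the equivalence. For the other, let `g n = n ^ (-ν)`, a
completely multiplicative weight with `g p < 1` at primes. Writing `m ∈ 𝒞(S)` as a word in the
primes of `S` bounds `∑_{𝒞(S)} g` by the geometric series `∑ₙ (∑_S g) ^ n`, finite once
`∑_S g < 1`. If only `∑_S g < ∞`, split `S` into finitely many primes and a tail of mass `< 1`:
splitting `m ∈ 𝒞(A ∪ B)` as `a * b` bounds `∑_{𝒞(A ∪ B)} g` by `(∑_{𝒞(A)} g) * (∑_{𝒞(B)} g)`.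
-/

open scoped ENNReal

/-- `𝒞(P)` of the paper. -/
def composedOf (P : Set ℕ) : Set ℕ := {m | 0 < m ∧ ∀ p : ℕ, p.Prime → p ∣ m → p ∈ P}

section composedOf

variable {P A B : Set ℕ}

lemma one_mem_composedOf : 1 ∈ composedOf P :=
  ⟨one_pos, fun _ hp hdvd => (hp.not_dvd_one hdvd).elim⟩

lemma mul_mem_composedOf_iff {m n : ℕ} :
    m * n ∈ composedOf P ↔ m ∈ composedOf P ∧ n ∈ composedOf P := by
  simp only [composedOf, Set.mem_ofPred_eq, CanonicallyOrderedAdd.mul_pos]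
  constructor
  · rintro ⟨⟨hm, hn⟩, h⟩
    exact ⟨⟨hm, fun p hp hd => h p hp (hd.mul_right n)⟩,
      ⟨hn, fun p hp hd => h p hp (hd.mul_left m)⟩⟩
  · rintro ⟨⟨hm, hm'⟩, hn, hn'⟩
    exact ⟨⟨hm, hn⟩, fun p hp hd => (hp.dvd_mul.mp hd).elim (hm' p hp) (hn' p hp)⟩

lemma Nat.Prime.mem_composedOf_iff {p : ℕ} (hp : p.Prime) : p ∈ composedOf P ↔ p ∈ P :=
  ⟨fun h => h.2 p hp dvd_rfl,
    fun h => ⟨hp.pos, fun _ hq hd => (Nat.prime_dvd_prime_iff_eq hq hp).mp hd ▸ h⟩⟩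

lemma exists_list_prod_eq_of_mem_composedOf {m : ℕ} (hm : m ∈ composedOf P) :
    ∃ l : List P, (l.map (↑)).prod = m := by
  induction m using induction_on_primes with
  | zero => exact (lt_irrefl 0 hm.1).elim
  | one => exact ⟨[], rfl⟩
  | prime_mul p a hp ih =>
    obtain ⟨hpP, ha⟩ := mul_mem_composedOf_iff.mp hm
    obtain ⟨l, rfl⟩ := ih ha
    exact ⟨⟨p, hp.mem_composedOf_iff.mp hpP⟩ :: l, rfl⟩

lemma exists_mul_eq_of_mem_composedOf_union {m : ℕ} (hm : m ∈ composedOf (A ∪ B)) :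
    ∃ a ∈ composedOf A, ∃ b ∈ composedOf B, a * b = m := by
  induction m using induction_on_primes with
  | zero => exact (lt_irrefl 0 hm.1).elim
  | one => exact ⟨1, one_mem_composedOf, 1, one_mem_composedOf, rfl⟩
  | prime_mul p c hp ih =>
    obtain ⟨hpAB, hc⟩ := mul_mem_composedOf_iff.mp hm
    obtain ⟨a, ha, b, hb, rfl⟩ := ih hc
    rcases hp.mem_composedOf_iff.mp hpAB with hpA | hpB
    · exact ⟨p * a, mul_mem_composedOf_iff.mpr ⟨hp.mem_composedOf_iff.mpr hpA, ha⟩, b, hb,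
        mul_assoc p a b⟩
    · exact ⟨a, ha, p * b, mul_mem_composedOf_iff.mpr ⟨hp.mem_composedOf_iff.mpr hpB, hb⟩,
        mul_left_comm a p b⟩

end composedOf

namespace ENNReal

variable {α : Type*}

lemma tsum_fin_prod_eq_pow (u : α → ℝ≥0∞) (n : ℕ) :
    ∑' v : Fin n → α, ∏ i, u (v i) = (∑' a, u a) ^ n := by
  induction n with
  | zero => simp
  | succ n ih =>
    rw [← (Fin.consEquiv fun _ => α).tsum_eq, ENNReal.tsum_prod', pow_succ', ← ih,
      ← ENNReal.tsum_mul_right]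
    refine tsum_congr fun a => ?_
    simp only [Fin.consEquiv, Equiv.coe_fn_mk, Fin.prod_univ_succ, Fin.cons_zero, Fin.cons_succ]
    exact ENNReal.tsum_mul_left

lemma tsum_list_prod_map (u : α → ℝ≥0∞) :
    ∑' l : List α, (l.map u).prod = ∑' n : ℕ, (∑' a, u a) ^ n := by
  rw [← List.equivSigmaTuple.symm.tsum_eq, ENNReal.tsum_sigma']
  refine tsum_congr fun n => ?_
  rw [← tsum_fin_prod_eq_pow]
  simp [List.equivSigmaTuple, List.map_ofFn, List.prod_ofFn, Function.comp_def]

lemma exists_finite_tsum_diff_lt {f : α → ℝ≥0∞} {S : Set α} (hS : ∑' x : S, f x ≠ ∞)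
    {ε : ℝ≥0∞} (hε : 0 < ε) : ∃ F ⊆ S, F.Finite ∧ ∑' x : ↥(S \ F), f x < ε := by
  obtain ⟨F₀, hF₀⟩ := ((tendsto_tsum_compl_atTop_zero hS).eventually (gt_mem_nhds hε)).exists
  refine ⟨Subtype.val '' (F₀ : Set S), by simp, F₀.finite_toSet.image _, lt_of_le_of_lt ?_ hF₀⟩
  let j : ↥(S \ Subtype.val '' (F₀ : Set S)) → {x : S // x ∉ F₀} :=
    fun x => ⟨⟨x, x.2.1⟩, fun h => x.2.2 ⟨_, h, rfl⟩⟩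
  exact tsum_comp_le_tsum_of_injective (f := j) (fun x y h => Subtype.ext (by simpa [j] using h))
    (fun x => f x)

end ENNReal

section Multiplicative

variable (g : ℕ →* ℝ≥0∞)

lemma tsum_composedOf_le_tsum_pow (P : Set ℕ) :
    ∑' m : composedOf P, g m ≤ ∑' n : ℕ, (∑' p : P, g p) ^ n := by
  choose s hs using fun m : composedOf P => exists_list_prod_eq_of_mem_composedOf m.2
  have hinj : s.Injective := fun a b h => Subtype.ext <| (hs a).symm.trans (h ▸ hs b)
  calc ∑' m : composedOf P, g m = ∑' m, ((s m).map fun p : P => g p).prod :=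
        tsum_congr fun m => by rw [← hs m, map_list_prod, List.map_map]; rfl
    _ ≤ ∑' l : List P, (l.map fun p : P => g p).prod :=
        ENNReal.tsum_comp_le_tsum_of_injective hinj _
    _ = _ := ENNReal.tsum_list_prod_map _

lemma tsum_composedOf_ne_top_of_tsum_lt_one {P : Set ℕ} (h : ∑' p : P, g p < 1) :
    ∑' m : composedOf P, g m ≠ ∞ :=
  ne_top_of_le_ne_top
    (by rw [ENNReal.tsum_geometric]; exact ENNReal.inv_ne_top.mpr (tsub_pos_iff_lt.mpr h).ne')
    (tsum_composedOf_le_tsum_pow g P)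

lemma tsum_composedOf_union_le (A B : Set ℕ) :
    ∑' m : composedOf (A ∪ B), g m ≤ (∑' a : composedOf A, g a) * ∑' b : composedOf B, g b := by
  choose a ha b hb hab using fun m : composedOf (A ∪ B) => exists_mul_eq_of_mem_composedOf_union m.2
  let s : composedOf (A ∪ B) → composedOf A × composedOf B := fun m => (⟨a m, ha m⟩, ⟨b m, hb m⟩)
  have hinj : s.Injective := fun m n h => Subtype.ext <| by
    simp only [s, Prod.mk.injEq, Subtype.mk.injEq] at h
    rw [← hab m, ← hab n, h.1, h.2]
  calc ∑' m : composedOf (A ∪ B), g m = ∑' m, g (s m).1 * g (s m).2 :=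
        tsum_congr fun m => by rw [← hab m]; exact map_mul g _ _
    _ ≤ ∑' x : composedOf A × composedOf B, g x.1 * g x.2 :=
        ENNReal.tsum_comp_le_tsum_of_injective hinj fun x => g x.1 * g x.2
    _ = _ := by simp only [ENNReal.tsum_prod', ENNReal.tsum_mul_left, ENNReal.tsum_mul_right]

lemma tsum_composedOf_ne_top_of_finite {F : Set ℕ} (hF : F.Finite) (hlt : ∀ p ∈ F, g p < 1) :
    ∑' m : composedOf F, g m ≠ ∞ := by
  induction F, hF using Set.Finite.induction_on with
  | empty => exact tsum_composedOf_ne_top_of_tsum_lt_one g (by simp)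
  | @insert p F _ _ ih =>
    rw [Set.insert_eq]
    refine ne_top_of_le_ne_top (ENNReal.mul_ne_top ?_ (ih fun q hq => hlt q (.inr hq)))
      (tsum_composedOf_union_le g _ _)
    exact tsum_composedOf_ne_top_of_tsum_lt_one g (by simpa using hlt p (.inl rfl))

theorem tsum_composedOf_ne_top {S : Set ℕ} (hlt : ∀ p ∈ S, g p < 1) (hS : ∑' p : S, g p ≠ ∞) :
    ∑' m : composedOf S, g m ≠ ∞ := by
  obtain ⟨F, hFS, hF, htail⟩ := ENNReal.exists_finite_tsum_diff_lt hS one_pos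
  rw [← Set.union_sdiff_cancel hFS]
  exact ne_top_of_le_ne_top (ENNReal.mul_ne_top
      (tsum_composedOf_ne_top_of_finite g hF fun p hp => hlt p (hFS hp))
      (tsum_composedOf_ne_top_of_tsum_lt_one g htail))
    (tsum_composedOf_union_le g _ _)

end Multiplicative

noncomputable def natRpowHom (r : ℝ) : ℕ →* ℝ≥0∞ where
  toFun n := (n : ℝ≥0∞) ^ r
  map_one' := by simp
  map_mul' m n := by
    push_cast
    exact ENNReal.mul_rpow_of_ne_top (ENNReal.natCast_ne_top m) (ENNReal.natCast_ne_top n) r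

lemma natRpowHom_lt_one {r : ℝ} (hr : r < 0) {n : ℕ} (hn : 1 < n) : natRpowHom r n < 1 :=
  ENNReal.rpow_lt_one_of_one_lt_of_neg (by exact_mod_cast hn) hr

lemma summable_iff_tsum_ofReal_ne_top {ι : Type*} {f : ι → ℝ} (hf : ∀ i, 0 ≤ f i) :
    Summable f ↔ ∑' i, ENNReal.ofReal (f i) ≠ ∞ :=
  ⟨Summable.tsum_ofReal_ne_top,
    fun h => (ENNReal.summable_toReal h).congr fun i => ENNReal.toReal_ofReal (hf i)⟩

lemma summable_natCast_rpow_iff_tsum_ne_top {ι : Type*} {f : ι → ℕ} (hf : ∀ i, 0 < f i) (r : ℝ) :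
    Summable (fun i => (f i : ℝ) ^ r) ↔ ∑' i, (f i : ℝ≥0∞) ^ r ≠ ∞ := by
  have hcast (i : ι) : (f i : ℝ≥0∞) ^ r = ENNReal.ofReal ((f i : ℝ) ^ r) := by
    rw [← ENNReal.ofReal_natCast, ENNReal.ofReal_rpow_of_pos (by exact_mod_cast hf i)]
  simp only [hcast]
  exact summable_iff_tsum_ofReal_ne_top fun i => by positivity

theorem exponent_depends_only_on_support (Q : Set ℕ) (hQpos : ∀ q ∈ Q, 0 < q)
    (hfree : ∀ q : ℕ, 0 < q → (q ∈ Q ↔ ∀ v : ℕ, 0 < v → v ∉ Q → ¬ v ∣ q))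
    (Supp : Set ℕ) (hSupp : Supp = {p : ℕ | p.Prime ∧ ∃ q ∈ Q, p ∣ q})
    (C : Set ℕ) (hC : C = {m : ℕ | 0 < m ∧ ∀ p : ℕ, p.Prime → p ∣ m → p ∈ Supp}) :
    ∀ ν : ℝ, 0 < ν →
      (∑' p : Supp, ((p : ℕ) : ENNReal) ^ (-ν)) ≤ (∑' q : Q, ((q : ℕ) : ENNReal) ^ (-ν)) ∧
      (∑' q : Q, ((q : ℕ) : ENNReal) ^ (-ν)) ≤ (∑' m : C, ((m : ℕ) : ENNReal) ^ (-ν)) ∧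
      (Summable (fun q : Q => ((q : ℕ) : ℝ) ^ (-ν)) ↔
        Summable (fun p : Supp => ((p : ℕ) : ℝ) ^ (-ν))) := by
  intro ν hν
  replace hC : C = composedOf Supp := hC
  have hSuppPrime : ∀ p ∈ Supp, p.Prime := fun p hp => (hSupp ▸ hp).1
  have hSuppQ : Supp ⊆ Q := by
    rw [hSupp]
    rintro p ⟨hp, q, hq, hpq⟩
    by_contra hpQ
    exact (hfree q (hQpos q hq)).mp hq p hp.pos hpQ hpq
  have hQC : Q ⊆ C := hC ▸ fun q hq => ⟨hQpos q hq, fun p hp hpq => hSupp ▸ ⟨hp, q, hq, hpq⟩⟩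
  refine ⟨ENNReal.tsum_mono_subtype (fun n : ℕ => (n : ℝ≥0∞) ^ (-ν)) hSuppQ,
    ENNReal.tsum_mono_subtype (fun n : ℕ => (n : ℝ≥0∞) ^ (-ν)) hQC,
    fun h => (h.comp_injective (Set.inclusion_injective hSuppQ)).congr fun _ => rfl, fun h => ?_⟩
  rw [summable_natCast_rpow_iff_tsum_ne_top fun p : Supp => (hSuppPrime p p.2).pos] at h
  rw [summable_natCast_rpow_iff_tsum_ne_top fun q : Q => hQpos q q.2]
  have hlt : ∀ p ∈ Supp, natRpowHom (-ν) p < 1 :=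
    fun p hp => natRpowHom_lt_one (neg_lt_zero.mpr hν) (hSuppPrime p hp).one_lt
  have hCfin : ∑' m : C, ((m : ℕ) : ℝ≥0∞) ^ (-ν) ≠ ∞ :=
    hC ▸ tsum_composedOf_ne_top (natRpowHom (-ν)) hlt h
  exact ne_top_of_le_ne_top hCfin (ENNReal.tsum_mono_subtype (fun n : ℕ => (n : ℝ≥0∞) ^ (-ν)) hQC)
end

section
/- Let $\mathcal{S}$ be an infinite set of positive integers and $\mu>0$ such that $\sum_{s\in\mathcal{S}} s^{-\mu} = \infty$. Then there exists a subset $\mathcal{S}'\subseteq\mathcal{S}$ such that $\sum_{s\in\mathcal{S}'} s^{-\mu} = \infty$ while $\sum_{s\in\mathcal{S}'} s^{-\mu-\epsilon} < \infty$ for every $\epsilon>0$; i.e., the exponent of convergence of $\mathcal{S}'$ equals $\mu$. -/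
/-!
Cut the divergent series `∑_{s ∈ S} s^{-μ}` into consecutive blocks of mass between `1` and `2`
(possible since every term is at most `1`) and keep only blocks starting at `N₀ < N₁ < ⋯` with
`N_k ≥ 2^k`, skipping everything in between. The kept blocks still have infinite total mass, while
on the `k`-th block the extra factor `s^{-ε}` is at most `2^{-kε}`, so the series with exponent
`μ + ε` is dominated by the geometric series `∑ 2 · 2^{-kε}`.
-/

open Set Finset

lemma exists_sum_Ico_mem_Icc {a : ℕ → ℝ} (ha0 : 0 ≤ a) (ha1 : ∀ n, a n ≤ 1)
    (ha : ¬ Summable a) (N : ℕ) :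
    ∃ M, N ≤ M ∧ 1 ≤ ∑ n ∈ Finset.Ico N M, a n ∧
      ∑ n ∈ Finset.Ico N M, a n ≤ 2 := by
  classical
  have hex : ∃ M, 1 ≤ ∑ n ∈ Finset.Ico N M, a n := by
    have htendsto := (not_summable_iff_tendsto_nat_atTop_of_nonneg ha0).1 ha
    obtain ⟨M, hM, hNM⟩ :=
      ((htendsto.eventually_ge_atTop (1 + ∑ n ∈ range N, a n)).and
        (Filter.eventually_ge_atTop N)).exists
    exact ⟨M, by rw [sum_Ico_eq_sub _ hNM]; linarith⟩
  have hN : N < Nat.find hex := by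
    by_contra! hle
    have hspec := Nat.find_spec hex
    rw [Finset.Ico_eq_empty_of_le hle, sum_empty] at hspec
    norm_num at hspec
  obtain ⟨M, hM⟩ := Nat.exists_eq_add_one_of_ne_zero (Nat.ne_zero_of_lt hN)
  have hlast : ∑ n ∈ Finset.Ico N M, a n < 1 :=
    not_le.1 (Nat.find_min hex (by omega))
  refine ⟨M + 1, by omega, hM ▸ Nat.find_spec hex, ?_⟩
  rw [sum_Ico_succ_top (by omega)]
  linarith [ha1 M]

lemma rpow_neg_le_of_two_pow_le {ε : ℝ} (hε : 0 ≤ ε) {k n : ℕ} (hkn : 2 ^ k ≤ n) :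
    (n : ℝ) ^ (-ε) ≤ ((2 : ℝ) ^ (-ε)) ^ k := by
  rw [Real.rpow_pow_comm zero_le_two]
  exact Real.rpow_le_rpow_of_nonpos (by positivity) (by exact_mod_cast hkn) (by linarith)

section Blocks

variable {N M : ℕ → ℕ} (hNM : ∀ k, N k ≤ M k) (hMN : ∀ k, M k ≤ N (k + 1))
include hNM hMN

lemma mem_iUnion_Ico_iff_of_mem_Ico {k n : ℕ} (hkn : N k ≤ n) (hnk : n < N (k + 1)) :
    n ∈ ⋃ j, Set.Ico (N j) (M j) ↔ n < M k := by
  have hmono : Monotone N := monotone_nat_of_le_succ fun k => (hNM k).trans (hMN k)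
  refine ⟨fun hn => ?_, fun hn => mem_iUnion.2 ⟨k, hkn, hn⟩⟩
  obtain ⟨j, hjn, hnj⟩ := mem_iUnion.1 hn
  rcases lt_trichotomy j k with hjk | rfl | hkj
  · have := (hMN j).trans (hmono hjk)
    omega
  · exact hnj
  · have : N (k + 1) ≤ N j := hmono hkj
    omega

lemma sum_range_indicator_iUnion_Ico {β : Type*} [AddCommMonoid β] (g : ℕ → β) (K : ℕ) :
    ∑ n ∈ range (N K), (⋃ j, Set.Ico (N j) (M j)).indicator g n =
      ∑ k ∈ range K, ∑ n ∈ Finset.Ico (N k) (M k), g n := by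
  have hmono : Monotone N := monotone_nat_of_le_succ fun k => (hNM k).trans (hMN k)
  induction K with
  | zero =>
    refine sum_eq_zero fun n hn => indicator_of_notMem (fun hmem => ?_) g
    obtain ⟨j, hjn, -⟩ := mem_iUnion.1 hmem
    have := hmono (Nat.zero_le j)
    rw [Finset.mem_range] at hn
    omega
  | succ K ih =>
    rw [sum_range_succ, ← ih, ← sum_range_add_sum_Ico _ (hmono K.le_succ),
      ← sum_Ico_consecutive _ (hNM K) (hMN K)]
    congr 1
    rw [← add_zero (∑ n ∈ Finset.Ico (N K) (M K), g n)]
    congr 1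
    · refine sum_congr rfl fun n hn => indicator_of_mem ?_ g
      rw [Finset.mem_Ico] at hn
      exact (mem_iUnion_Ico_iff_of_mem_Ico hNM hMN hn.1 (by linarith [hMN K])).2 hn.2
    · refine sum_eq_zero fun n hn => indicator_of_notMem (fun hmem => ?_) g
      rw [Finset.mem_Ico] at hn
      have := (mem_iUnion_Ico_iff_of_mem_Ico hNM hMN (by linarith [hNM K]) hn.2).1 hmem
      omega

lemma not_summable_indicator_iUnion_Ico {a : ℕ → ℝ} (ha0 : 0 ≤ a)
    (hmass : ∀ k, 1 ≤ ∑ n ∈ Finset.Ico (N k) (M k), a n) :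
    ¬ Summable ((⋃ k, Set.Ico (N k) (M k)).indicator a) := by
  intro hsum
  obtain ⟨K, hK⟩ := exists_nat_gt (∑' n, (⋃ k, Set.Ico (N k) (M k)).indicator a n)
  refine hK.not_ge ?_
  calc (K : ℝ) = ∑ k ∈ range K, 1 := by simp
    _ ≤ ∑ k ∈ range K, ∑ n ∈ Finset.Ico (N k) (M k), a n := sum_le_sum fun k _ => hmass k
    _ = ∑ n ∈ range (N K), (⋃ k, Set.Ico (N k) (M k)).indicator a n :=
      (sum_range_indicator_iUnion_Ico hNM hMN a K).symm
    _ ≤ _ := hsum.sum_le_tsum _ fun n _ => indicator_nonneg (fun n _ => ha0 n) n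

lemma summable_rpow_neg_mul_indicator_iUnion_Ico {a : ℕ → ℝ} (ha0 : 0 ≤ a)
    (hmass : ∀ k, ∑ n ∈ Finset.Ico (N k) (M k), a n ≤ 2) (hgrowth : ∀ k, 2 ^ k ≤ N k)
    {ε : ℝ} (hε : 0 < ε) :
    Summable fun n : ℕ => (n : ℝ) ^ (-ε) * (⋃ k, Set.Ico (N k) (M k)).indicator a n := by
  set c := (2 : ℝ) ^ (-ε)
  have hc : c < 1 := Real.rpow_lt_one_of_one_lt_of_neg one_lt_two (by linarith)
  have hnonneg : ∀ n : ℕ, 0 ≤ (n : ℝ) ^ (-ε) * a n := fun n =>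
    mul_nonneg (by positivity) (ha0 n)
  have hblock_le (k : ℕ) :
      ∑ n ∈ Finset.Ico (N k) (M k), (n : ℝ) ^ (-ε) * a n ≤ 2 * c ^ k := by
    calc ∑ n ∈ Finset.Ico (N k) (M k), (n : ℝ) ^ (-ε) * a n
        ≤ ∑ n ∈ Finset.Ico (N k) (M k), c ^ k * a n := by
          refine sum_le_sum fun n hn => mul_le_mul_of_nonneg_right ?_ (ha0 n)
          exact rpow_neg_le_of_two_pow_le hε.le ((hgrowth k).trans (Finset.mem_Ico.1 hn).1)
      _ ≤ 2 * c ^ k := by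
          rw [← mul_sum, mul_comm]
          exact mul_le_mul_of_nonneg_right (hmass k) (by positivity)
  simp only [← indicator_mul_right _ (fun n : ℕ => (n : ℝ) ^ (-ε))]
  set g := (⋃ k, Set.Ico (N k) (M k)).indicator fun n => (n : ℝ) ^ (-ε) * a n
  refine summable_of_sum_range_le (c := ∑' k, 2 * c ^ k)
    (fun n => indicator_nonneg (fun n _ => hnonneg n) n) fun K => ?_
  calc ∑ n ∈ range K, g n ≤ ∑ n ∈ range (N K), g n :=
      sum_le_sum_of_subset_of_nonneg
        (range_subset_range.2 ((Nat.lt_two_pow_self (n := K)).le.trans (hgrowth K)))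
        fun n _ _ => indicator_nonneg (fun n _ => hnonneg n) n
    _ = ∑ k ∈ range K, ∑ n ∈ Finset.Ico (N k) (M k), (n : ℝ) ^ (-ε) * a n :=
      sum_range_indicator_iUnion_Ico hNM hMN _ K
    _ ≤ ∑ k ∈ range K, 2 * c ^ k := sum_le_sum fun k _ => hblock_le k
    _ ≤ ∑' k, 2 * c ^ k :=
      ((summable_geometric_of_lt_one (by positivity) hc).mul_left 2).sum_le_tsum _
        fun k _ => by positivity

end Blocks

/-- The `k`-th kept block is `[blockStart M k, M (blockStart M k))`; doubling the starts makes
`n ^ (-ε)` decay geometrically along the blocks. -/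
def blockStart (M : ℕ → ℕ) : ℕ → ℕ
  | 0 => 1
  | k + 1 => max (M (blockStart M k)) (2 * blockStart M k)

lemma two_pow_le_blockStart (M : ℕ → ℕ) (k : ℕ) : 2 ^ k ≤ blockStart M k := by
  induction k with
  | zero => simp [blockStart]
  | succ k ih =>
    rw [blockStart, pow_succ]
    exact le_max_of_le_right (by omega)

theorem exists_not_summable_indicator_summable_rpow_neg_mul {a : ℕ → ℝ} (ha0 : 0 ≤ a)
    (ha1 : ∀ n, a n ≤ 1) (ha : ¬ Summable a) :
    ∃ U : Set ℕ, ¬ Summable (U.indicator a) ∧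
      ∀ ε : ℝ, 0 < ε → Summable fun n : ℕ => (n : ℝ) ^ (-ε) * U.indicator a n := by
  choose M hle_M hmass_ge hmass_le using exists_sum_Ico_mem_Icc ha0 ha1 ha
  have hNM : ∀ k, blockStart M k ≤ M (blockStart M k) := fun k => hle_M _
  have hMN : ∀ k, M (blockStart M k) ≤ blockStart M (k + 1) := fun k => le_max_left _ _
  exact ⟨_, not_summable_indicator_iUnion_Ico hNM hMN ha0 fun k => hmass_ge _,
    fun ε hε => summable_rpow_neg_mul_indicator_iUnion_Ico hNM hMN ha0 (fun k => hmass_le _)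
      (two_pow_le_blockStart M) hε⟩

theorem exists_subset_with_exact_exponent_general (S : Set ℕ) (μ : ℝ) (hμ : 0 < μ)
    (hdiv : ¬ Summable (fun s : S => ((s : ℕ) : ℝ) ^ (-μ))) :
    ∃ S' : Set ℕ, S' ⊆ S ∧
      ¬ Summable (fun s : S' => ((s : ℕ) : ℝ) ^ (-μ)) ∧
      ∀ ε : ℝ, 0 < ε → Summable (fun s : S' => ((s : ℕ) : ℝ) ^ (-(μ + ε))) := by
  set a := S.indicator fun n : ℕ => (n : ℝ) ^ (-μ)
  -- `0 ^ (-μ) = 0` in `ℝ`, so `0 ∈ S` is harmless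
  have ha1 : ∀ n, a n ≤ 1 := by
    refine indicator_le' (fun n _ => ?_) fun _ _ => zero_le_one
    rcases n.eq_zero_or_pos with rfl | hn
    · simp [Real.zero_rpow (neg_ne_zero.2 hμ.ne')]
    · exact Real.rpow_le_one_of_one_le_of_nonpos (by exact_mod_cast hn) (by linarith)
  obtain ⟨U, hU, hUε⟩ := exists_not_summable_indicator_summable_rpow_neg_mul
    (indicator_nonneg fun n _ => by positivity) ha1 (summable_subtype_iff_indicator.not.1 hdiv)
  refine ⟨U ∩ S, inter_subset_right, ?_, fun ε hε => ?_⟩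
  · rw [indicator_indicator] at hU
    exact summable_subtype_iff_indicator.not.2 hU
  · refine (summable_subtype_iff_indicator (f := fun n : ℕ => (n : ℝ) ^ (-(μ + ε)))).2
      ((hUε ε hε).congr fun n => ?_)
    rw [indicator_indicator, ← indicator_mul_right _ (fun n : ℕ => (n : ℝ) ^ (-ε))]
    refine congrFun (congrArg _ (funext fun n => ?_)) n
    rw [← Real.rpow_add' (Nat.cast_nonneg n) (by linarith), neg_add, add_comm]

theorem exists_subset_with_exact_exponent (S : Set ℕ) (hSpos : ∀ s ∈ S, 0 < s)
    (hSinf : S.Infinite) (μ : ℝ) (hμ : 0 < μ)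
    (hdiv : ¬ Summable (fun s : S => ((s : ℕ) : ℝ) ^ (-μ))) :
    ∃ S' : Set ℕ, S' ⊆ S ∧
      ¬ Summable (fun s : S' => ((s : ℕ) : ℝ) ^ (-μ)) ∧
      ∀ ε : ℝ, 0 < ε → Summable (fun s : S' => ((s : ℕ) : ℝ) ^ (-(μ + ε))) :=
  exists_subset_with_exact_exponent_general S μ hμ hdiv
end

section
/- For every $\alpha\in(0,1]$ there exists an $\mathbb{N}^*\setminus Q$-free set $Q$ with exponent of convergence $\nu(Q)=\alpha$. -/
/-!
Any set `Q = {1} ∪ S` with `S` a set of primes is closed under divisors, and for sets of positive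
integers this is exactly the freeness condition. In each dyadic block `[2^k, 2^(k+1))` let `S`
contain `⌈2^(αk)⌉` of its primes, or all of them if there are fewer. Counting block by block,
`∑_{q ∈ Q} q^(-ν) ≲ ∑_k 2^((α-ν)k) < ∞` for `ν > α`. Conversely, for `β < 1` infinitely many
blocks contain at least `2^(βk)` primes, since otherwise `∑ 1/p` would converge by the same count;
taking `ν < β < α`, those blocks contribute at least `2^(-ν) 2^((β-ν)k)` each, so the series
diverges.
-/

open Filter Finset

theorem csInf_eq_of_Ioi_subset_of_subset_Ici {α : Type*} [ConditionallyCompleteLinearOrder α]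
    [DenselyOrdered α] [NoMaxOrder α] {s : Set α} {a : α} (h₁ : Set.Ioi a ⊆ s)
    (h₂ : s ⊆ Set.Ici a) : sInf s = a :=
  le_antisymm ((csInf_le_csInf ⟨a, h₂⟩ Set.nonempty_Ioi h₁).trans_eq csInf_Ioi)
    (le_csInf (Set.nonempty_Ioi.mono h₁) h₂)

theorem mem_iff_forall_not_dvd_of_dvd_closed {Q : Set ℕ} (hQ : ∀ q ∈ Q, ∀ d, d ∣ q → d ∈ Q)
    {q : ℕ} (hq : 0 < q) : q ∈ Q ↔ ∀ v, 0 < v → v ∉ Q → ¬ v ∣ q :=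
  ⟨fun hqQ _ _ hvQ hvq => hvQ (hQ q hqQ _ hvq), fun h => by_contra fun hqQ => h q hq hqQ dvd_rfl⟩

theorem mem_insert_one_of_dvd {S : Set ℕ} (hS : ∀ p ∈ S, p.Prime) {q d : ℕ}
    (hq : q ∈ insert 1 S) (hd : d ∣ q) : d ∈ insert 1 S := by
  rcases hq with rfl | hq
  · exact .inl (Nat.dvd_one.mp hd)
  · rcases (hS q hq).eq_one_or_self_of_dvd d hd with rfl | rfl
    exacts [.inl rfl, .inr hq]

def dyadicBlock (k : ℕ) : Finset ℕ := Ico (2 ^ k) (2 ^ (k + 1))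

theorem log_eq_of_mem_dyadicBlock {n k : ℕ} (hn : n ∈ dyadicBlock k) : Nat.log 2 n = k :=
  Nat.log_eq_of_pow_le_of_lt_pow (mem_Ico.mp hn).1 (mem_Ico.mp hn).2

theorem sum_range_two_pow (f : ℕ → ℝ) (n : ℕ) :
    ∑ i ∈ range (2 ^ n), f i = f 0 + ∑ k ∈ range n, ∑ i ∈ dyadicBlock k, f i := by
  induction n with
  | zero => simp
  | succ n ih =>
    rw [← sum_range_add_sum_Ico _ (Nat.pow_le_pow_right two_pos n.le_succ), ih, sum_range_succ,
      add_assoc, dyadicBlock]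

theorem summable_of_summable_sum_dyadicBlock {f : ℕ → ℝ} (hf : 0 ≤ f)
    (h : Summable fun k => ∑ i ∈ dyadicBlock k, f i) : Summable f := by
  refine summable_of_sum_range_le hf (c := f 0 + ∑' k, ∑ i ∈ dyadicBlock k, f i) fun n => ?_
  calc ∑ i ∈ range n, f i ≤ ∑ i ∈ range (2 ^ n), f i :=
        sum_le_sum_of_subset_of_nonneg (range_subset_range.mpr n.lt_two_pow_self.le)
          fun i _ _ => hf i
    _ = f 0 + ∑ k ∈ range n, ∑ i ∈ dyadicBlock k, f i := sum_range_two_pow f n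
    _ ≤ _ := add_le_add_right (h.sum_le_tsum _ fun k _ => sum_nonneg fun i _ => hf i) _

theorem rpow_neg_le_of_mem_dyadicBlock {n k : ℕ} (hn : n ∈ dyadicBlock k) {ν : ℝ} (hν : 0 ≤ ν) :
    (n : ℝ) ^ (-ν) ≤ ((2 : ℝ) ^ k) ^ (-ν) := by
  have hn : (2 : ℝ) ^ k ≤ n := by exact_mod_cast (mem_Ico.mp hn).1
  exact Real.rpow_le_rpow_of_nonpos (by positivity) hn (neg_nonpos.mpr hν)

theorem rpow_neg_ge_of_mem_dyadicBlock {n k : ℕ} (hn : n ∈ dyadicBlock k) {ν : ℝ} (hν : 0 ≤ ν) :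
    ((2 : ℝ) ^ (k + 1)) ^ (-ν) ≤ (n : ℝ) ^ (-ν) := by
  obtain ⟨h₁, h₂⟩ := mem_Ico.mp hn
  have hn : (n : ℝ) ≤ 2 ^ (k + 1) := by exact_mod_cast h₂.le
  have hn₀ : (0 : ℝ) < n := by exact_mod_cast (Nat.two_pow_pos k).trans_le h₁
  exact Real.rpow_le_rpow_of_nonpos hn₀ hn (neg_nonpos.mpr hν)

section BlockCount

open scoped Classical

noncomputable def blockCount (A : Set ℕ) (k : ℕ) : ℕ := #{n ∈ dyadicBlock k | n ∈ A}

theorem sum_indicator_dyadicBlock_le (A : Set ℕ) (k : ℕ) {ν : ℝ} (hν : 0 ≤ ν) :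
    ∑ n ∈ dyadicBlock k, A.indicator (fun n : ℕ => (n : ℝ) ^ (-ν)) n
      ≤ blockCount A k * ((2 : ℝ) ^ k) ^ (-ν) := by
  rw [sum_indicator_eq_sum_filter, ← nsmul_eq_mul]
  exact sum_le_card_nsmul _ _ _ fun n hn =>
    rpow_neg_le_of_mem_dyadicBlock (mem_filter.mp hn).1 hν

theorem le_sum_indicator_dyadicBlock (A : Set ℕ) (k : ℕ) {ν : ℝ} (hν : 0 ≤ ν) :
    blockCount A k * ((2 : ℝ) ^ (k + 1)) ^ (-ν)
      ≤ ∑ n ∈ dyadicBlock k, A.indicator (fun n : ℕ => (n : ℝ) ^ (-ν)) n := by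
  rw [sum_indicator_eq_sum_filter, ← nsmul_eq_mul]
  exact card_nsmul_le_sum _ _ _ fun n hn =>
    rpow_neg_ge_of_mem_dyadicBlock (mem_filter.mp hn).1 hν

theorem summable_rpow_neg_of_blockCount_le {A : Set ℕ} {α ν C : ℝ} (hν : 0 ≤ ν) (hαν : α < ν)
    (h : ∀ᶠ k in atTop, (blockCount A k : ℝ) ≤ C * ((2 : ℝ) ^ k) ^ α) :
    Summable fun n : A => (n : ℝ) ^ (-ν) := by
  have hf : 0 ≤ A.indicator fun n : ℕ => (n : ℝ) ^ (-ν) :=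
    Set.indicator_nonneg fun n _ => by positivity
  refine summable_subtype_iff_indicator.mpr (summable_of_summable_sum_dyadicBlock hf ?_)
  have hr : (2 : ℝ) ^ (α - ν) < 1 := Real.rpow_lt_one_of_one_lt_of_neg one_lt_two (by linarith)
  refine Summable.of_norm_bounded_eventually_nat
    ((summable_geometric_of_lt_one (by positivity) hr).mul_left C) ?_
  filter_upwards [h] with k hk
  rw [Real.norm_of_nonneg (sum_nonneg fun n _ => hf n)]
  calc _ ≤ blockCount A k * ((2 : ℝ) ^ k) ^ (-ν) := sum_indicator_dyadicBlock_le A k hν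
    _ ≤ C * ((2 : ℝ) ^ k) ^ α * ((2 : ℝ) ^ k) ^ (-ν) := by gcongr
    _ = C * ((2 : ℝ) ^ (α - ν)) ^ k := by
      rw [mul_assoc, ← Real.rpow_add (by positivity), Real.rpow_pow_comm zero_le_two,
        ← sub_eq_add_neg]

theorem not_summable_rpow_neg_of_frequently_le_blockCount {A : Set ℕ} {β ν : ℝ} (hν : 0 ≤ ν)
    (hνβ : ν < β) (h : ∃ᶠ k in atTop, ((2 : ℝ) ^ k) ^ β ≤ blockCount A k) :
    ¬ Summable fun n : A => (n : ℝ) ^ (-ν) := by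
  intro hA
  set f := A.indicator fun n : ℕ => (n : ℝ) ^ (-ν)
  have hf : Summable f := summable_subtype_iff_indicator.mp hA
  have hR : 1 < (2 : ℝ) ^ (β - ν) := Real.one_lt_rpow one_lt_two (by linarith)
  have hgrowth : Tendsto (fun k : ℕ => (2 : ℝ) ^ (-ν) * ((2 : ℝ) ^ (β - ν)) ^ k) atTop atTop :=
    (tendsto_pow_atTop_atTop_of_one_lt hR).const_mul_atTop (by positivity)
  obtain ⟨k, hk, hkT⟩ := (h.and_eventually (hgrowth.eventually_gt_atTop (∑' n, f n))).exists
  refine hkT.not_ge ?_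
  calc (2 : ℝ) ^ (-ν) * ((2 : ℝ) ^ (β - ν)) ^ k
        = ((2 : ℝ) ^ k) ^ β * ((2 : ℝ) ^ (k + 1)) ^ (-ν) := by
          rw [Real.rpow_pow_comm zero_le_two, ← Real.rpow_natCast_mul zero_le_two,
            ← Real.rpow_natCast_mul zero_le_two, ← Real.rpow_natCast_mul zero_le_two,
            ← Real.rpow_add two_pos, ← Real.rpow_add two_pos]
          push_cast
          ring_nf
    _ ≤ blockCount A k * ((2 : ℝ) ^ (k + 1)) ^ (-ν) := by gcongr
    _ ≤ ∑ n ∈ dyadicBlock k, f n := le_sum_indicator_dyadicBlock A k hν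
    _ ≤ ∑' n, f n := hf.sum_le_tsum _ fun n _ => Set.indicator_nonneg (fun n _ => by positivity) n

end BlockCount

def primesIn (k : ℕ) : Finset ℕ := {p ∈ dyadicBlock k | p.Prime}

theorem frequently_rpow_le_card_primesIn {β : ℝ} (hβ : β < 1) :
    ∃ᶠ k in atTop, ((2 : ℝ) ^ k) ^ β ≤ #(primesIn k) := by
  by_contra h
  rw [not_frequently] at h
  have hcount : ∀ k, blockCount {p | p.Prime} k = #(primesIn k) := fun k => by
    unfold blockCount primesIn
    congr!
  have hprimes := summable_rpow_neg_of_blockCount_le (A := {p | p.Prime}) (C := 1) zero_le_one hβ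
    (h.mono fun k hk => by rw [hcount, one_mul]; exact (not_le.mp hk).le)
  have hinv : (fun n : ℕ => (n : ℝ) ^ (-1 : ℝ)) = fun n : ℕ => 1 / (n : ℝ) :=
    funext fun n => by rw [Real.rpow_neg_one, one_div]
  exact not_summable_one_div_on_primes (hinv ▸ summable_subtype_iff_indicator.mp hprimes)

noncomputable def selectedPrimes (α : ℝ) (k : ℕ) : Finset ℕ :=
  (exists_subset_card_eq (min_le_right ⌈((2 : ℝ) ^ k) ^ α⌉₊ #(primesIn k))).choose

theorem selectedPrimes_subset (α : ℝ) (k : ℕ) : selectedPrimes α k ⊆ primesIn k :=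
  (exists_subset_card_eq (min_le_right ⌈((2 : ℝ) ^ k) ^ α⌉₊ #(primesIn k))).choose_spec.1

theorem card_selectedPrimes (α : ℝ) (k : ℕ) :
    #(selectedPrimes α k) = min ⌈((2 : ℝ) ^ k) ^ α⌉₊ #(primesIn k) :=
  (exists_subset_card_eq (min_le_right ⌈((2 : ℝ) ^ k) ^ α⌉₊ #(primesIn k))).choose_spec.2

def freeSet (α : ℝ) : Set ℕ := insert 1 (⋃ k, (selectedPrimes α k : Set ℕ))

theorem mem_dyadicBlock_and_prime_of_mem_selectedPrimes {α : ℝ} {k p : ℕ}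
    (hp : p ∈ selectedPrimes α k) : p ∈ dyadicBlock k ∧ p.Prime :=
  mem_filter.mp (selectedPrimes_subset α k hp)

theorem prime_of_mem_iUnion_selectedPrimes {α : ℝ} {p : ℕ}
    (hp : p ∈ ⋃ k, (selectedPrimes α k : Set ℕ)) : p.Prime := by
  obtain ⟨k, hk⟩ := Set.mem_iUnion.mp hp
  exact (mem_dyadicBlock_and_prime_of_mem_selectedPrimes hk).2

theorem pos_of_mem_freeSet {α : ℝ} {q : ℕ} (hq : q ∈ freeSet α) : 0 < q := by
  rcases hq with rfl | hq
  exacts [one_pos, (prime_of_mem_iUnion_selectedPrimes hq).pos]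

theorem blockCount_freeSet_le (α : ℝ) (k : ℕ) :
    blockCount (freeSet α) k ≤ #(selectedPrimes α k) + 1 := by
  classical
  refine (card_le_card fun n hn => ?_).trans (card_insert_le 1 _)
  obtain ⟨hnk, hn | hn⟩ := mem_filter.mp hn
  · exact mem_insert.mpr (.inl hn)
  obtain ⟨j, hj⟩ := Set.mem_iUnion.mp hn
  have hjk : j = k := (log_eq_of_mem_dyadicBlock
    (mem_dyadicBlock_and_prime_of_mem_selectedPrimes hj).1).symm.trans
      (log_eq_of_mem_dyadicBlock hnk)
  exact mem_insert_of_mem (hjk ▸ hj)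

theorem card_selectedPrimes_le_blockCount (α : ℝ) (k : ℕ) :
    #(selectedPrimes α k) ≤ blockCount (freeSet α) k := by
  classical
  exact card_le_card fun p hp => mem_filter.mpr
    ⟨(mem_dyadicBlock_and_prime_of_mem_selectedPrimes hp).1, .inr (Set.mem_iUnion.mpr ⟨k, hp⟩)⟩

theorem blockCount_freeSet_le_three_mul {α : ℝ} (hα : 0 ≤ α) (k : ℕ) :
    (blockCount (freeSet α) k : ℝ) ≤ 3 * ((2 : ℝ) ^ k) ^ α := by
  have hx : 1 ≤ ((2 : ℝ) ^ k) ^ α := Real.one_le_rpow (one_le_pow₀ one_le_two) hα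
  have hsel : (#(selectedPrimes α k) : ℝ) ≤ ⌈((2 : ℝ) ^ k) ^ α⌉₊ := by
    exact_mod_cast (card_selectedPrimes α k).trans_le (min_le_left _ _)
  have hceil := Nat.ceil_lt_add_one (zero_le_one.trans hx)
  have hcount : (blockCount (freeSet α) k : ℝ) ≤ #(selectedPrimes α k) + 1 := by
    exact_mod_cast blockCount_freeSet_le α k
  linarith

theorem frequently_rpow_le_blockCount_freeSet {α β : ℝ} (hβα : β ≤ α) (hβ : β < 1) :
    ∃ᶠ k in atTop, ((2 : ℝ) ^ k) ^ β ≤ blockCount (freeSet α) k := by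
  refine (frequently_rpow_le_card_primesIn hβ).mono fun k hk => ?_
  have hpow : ((2 : ℝ) ^ k) ^ β ≤ ((2 : ℝ) ^ k) ^ α :=
    Real.rpow_le_rpow_of_exponent_le (one_le_pow₀ one_le_two) hβα
  calc ((2 : ℝ) ^ k) ^ β ≤ #(selectedPrimes α k) := by
        rw [card_selectedPrimes, Nat.cast_min]
        exact le_min (hpow.trans (Nat.le_ceil _)) hk
    _ ≤ blockCount (freeSet α) k := by exact_mod_cast card_selectedPrimes_le_blockCount α k

theorem summable_rpow_neg_freeSet {α ν : ℝ} (hα : 0 ≤ α) (hαν : α < ν) :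
    Summable fun q : freeSet α => (q : ℝ) ^ (-ν) :=
  summable_rpow_neg_of_blockCount_le (hα.trans hαν.le) hαν
    (Eventually.of_forall (blockCount_freeSet_le_three_mul hα))

theorem not_summable_rpow_neg_freeSet {α ν : ℝ} (hν : 0 ≤ ν) (hνα : ν < α) (hα : α ≤ 1) :
    ¬ Summable fun q : freeSet α => (q : ℝ) ^ (-ν) :=
  not_summable_rpow_neg_of_frequently_le_blockCount hν (by linarith : ν < (ν + α) / 2)
    (frequently_rpow_le_blockCount_freeSet (by linarith) (by linarith))

theorem exists_free_set_with_exponent (α : ℝ) (hα : α ∈ Set.Ioc (0 : ℝ) 1) :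
    ∃ Q : Set ℕ, (∀ q ∈ Q, 0 < q) ∧
      (∀ q : ℕ, 0 < q → (q ∈ Q ↔ ∀ v : ℕ, 0 < v → v ∉ Q → ¬ v ∣ q)) ∧
      sInf {ν : ℝ | 0 < ν ∧ Summable (fun q : Q => ((q : ℕ) : ℝ) ^ (-ν))} = α := by
  obtain ⟨hα₀, hα₁⟩ := hα
  refine ⟨freeSet α, fun q => pos_of_mem_freeSet,
    fun q => mem_iff_forall_not_dvd_of_dvd_closed
      fun _ hq _ => mem_insert_one_of_dvd (fun _ => prime_of_mem_iUnion_selectedPrimes) hq,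
    csInf_eq_of_Ioi_subset_of_subset_Ici ?_ ?_⟩
  · exact fun ν hν => ⟨hα₀.trans hν, summable_rpow_neg_freeSet hα₀.le hν⟩
  · rintro ν ⟨hν₀, hsum⟩
    by_contra hνα
    exact not_summable_rpow_neg_freeSet hν₀.le (not_le.mp hνα) hα₁ hsum
end

section
/- Let $n\ge 2$, $\tau>1$, let $Q$ be an $\mathbb{N}^*\setminus Q$-free set with $Q\neq\mathbb{N}^*$, let $v\in\mathbb{N}^*\setminus Q$ and $u\in\mathbb{N}^*$ coprime to $v$, and let $A=(a_1,\dots,a_n)\in\mathbb{N}^n\setminus\{0\}$. Then $\Gamma_n(A,u,v)\cap W_{\tau,n} \subseteq W^*_{\tau,n}(Q)$, where $\Gamma_n(A,u,v)=\{x\in\mathbb{R}^n : \sum_i a_i x_i = u/v\}$. -/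
/-!
If `x` lies on the hyperplane `∑ aᵢ xᵢ = u / v` and `p / q` approximates `x` to within `q ^ (-τ)`
in every coordinate, then `∑ aᵢ pᵢ / q` approximates `u / v` to within `(∑ |aᵢ|) q ^ (-τ)`.
Since `τ > 1` this is eventually less than `1 / (v q)`, which forces the integer `u q - v ∑ aᵢ pᵢ`
to vanish; coprimality of `u` and `v` then gives `v ∣ q`. So all but finitely many good
denominators of `x` are multiples of `v ∉ Q`, and none of them lies in the `ℕ* \ Q`-free set `Q`.
-/

open Filter

lemma abs_sum_mul_sub_sum_mul_le {ι : Type*} [Fintype ι] (a x y : ι → ℝ) {ε : ℝ}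
    (h : ∀ i, |x i - y i| ≤ ε) :
    |∑ i, a i * x i - ∑ i, a i * y i| ≤ (∑ i, |a i|) * ε := by
  rw [← Finset.sum_sub_distrib, Finset.sum_mul]
  refine (Finset.abs_sum_le_sum_abs _ _).trans (Finset.sum_le_sum fun i _ => ?_)
  rw [← mul_sub, abs_mul]
  exact mul_le_mul_of_nonneg_left (h i) (abs_nonneg _)

lemma mul_eq_mul_of_abs_div_sub_div_lt {u P : ℤ} {v q : ℕ} (hv : 0 < v) (hq : 0 < q)
    (h : |(u : ℝ) / v - P / q| < 1 / (v * q)) : u * q = v * P := by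
  have hvq : (0 : ℝ) < v * q := by positivity
  have key : |((u * q - v * P : ℤ) : ℝ)| < 1 := by
    have : ((u * q - v * P : ℤ) : ℝ) = (v * q) * ((u : ℝ) / v - P / q) := by
      push_cast
      field_simp
    rw [this, abs_mul, abs_of_pos hvq]
    calc (v * q : ℝ) * |(u : ℝ) / v - P / q| < (v * q) * (1 / (v * q)) := by gcongr
      _ = 1 := mul_one_div_cancel hvq.ne'
  rw [← sub_eq_zero, ← Int.abs_lt_one_iff]
  exact_mod_cast key

lemma eventually_mul_lt_rpow {τ : ℝ} (hτ : 1 < τ) (C : ℝ) :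
    ∀ᶠ q : ℕ in atTop, C * q < (q : ℝ) ^ τ := by
  have htend : Tendsto (fun q : ℕ => (q : ℝ) ^ (τ - 1)) atTop atTop :=
    (tendsto_rpow_atTop (by linarith)).comp tendsto_natCast_atTop_atTop
  filter_upwards [htend.eventually_gt_atTop C, eventually_gt_atTop 0] with q hC hq
  have hqR : (0 : ℝ) < q := by exact_mod_cast hq
  rw [Real.rpow_sub_one hqR.ne', lt_div_iff₀ hqR] at hC
  exact hC

lemma eventually_dvd_of_forall_abs_sub_lt {ι : Type*} [Fintype ι] {τ : ℝ} (hτ : 1 < τ)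
    (a : ι → ℤ) {u : ℤ} {v : ℕ} (hv : 0 < v) (huv : IsCoprime u v) {x : ι → ℝ}
    (hx : ∑ i, (a i : ℝ) * x i = u / v) :
    ∀ᶠ q : ℕ in atTop, (∃ p : ι → ℤ, ∀ i, |x i - p i / q| < 1 / (q : ℝ) ^ τ) → v ∣ q := by
  filter_upwards [eventually_mul_lt_rpow hτ (v * ∑ i, |(a i : ℝ)|), eventually_gt_atTop 0]
    with q hlt hq
  rintro ⟨p, hp⟩
  have hqR : (0 : ℝ) < q := by exact_mod_cast hq
  have happrox : |(u : ℝ) / v - ((∑ i, a i * p i : ℤ) : ℝ) / q| < 1 / (v * q) :=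
    calc |(u : ℝ) / v - ((∑ i, a i * p i : ℤ) : ℝ) / q|
        = |∑ i, (a i : ℝ) * x i - ∑ i, (a i : ℝ) * (p i / q)| := by
          rw [hx]
          push_cast
          simp only [Finset.sum_div, mul_div_assoc]
      _ ≤ (∑ i, |(a i : ℝ)|) * (1 / (q : ℝ) ^ τ) :=
          abs_sum_mul_sub_sum_mul_le _ _ _ fun i => (hp i).le
      _ < 1 / (v * q) := by
          rw [mul_one_div, div_lt_div_iff₀ (by positivity) (by positivity)]
          linarith
  have heq := mul_eq_mul_of_abs_div_sub_div_lt hv hq happrox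
  exact Int.natCast_dvd_natCast.mp (huv.symm.dvd_of_dvd_mul_left ⟨_, heq⟩)

theorem hyperplane_slice_subset_liminf_set_general
    (n : ℕ) (τ : ℝ) (hτ : 1 < τ)
    (Q : Set ℕ) (hQpos : ∀ q ∈ Q, 0 < q)
    (hfree : ∀ q : ℕ, 0 < q → (q ∈ Q ↔ ∀ w : ℕ, 0 < w → w ∉ Q → ¬ w ∣ q))
    (u v : ℕ) (hv : 0 < v) (hvQ : v ∉ Q) (huv : Nat.Coprime u v)
    (a : Fin n → ℕ)
    (W WQ : Set (Fin n → ℝ))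
    (hWQ : WQ = {x : Fin n → ℝ |
      {q : ℕ | q ∈ Q ∧ ∃ p : Fin n → ℤ,
        ∀ i, |x i - (p i : ℝ) / (q : ℝ)| < 1 / (q : ℝ) ^ τ}.Infinite}) :
    {x : Fin n → ℝ | ∑ i, (a i : ℝ) * x i = (u : ℝ) / (v : ℝ)} ∩ W ⊆ W \ WQ := by
  rintro x ⟨hplane, hxW⟩
  refine ⟨hxW, fun hinf => ?_⟩
  have hdvd := eventually_dvd_of_forall_abs_sub_lt hτ (fun i => (a i : ℤ)) hv
    (Nat.isCoprime_iff_coprime.mpr huv) (by push_cast; exact hplane)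
  rw [hWQ, Set.mem_ofPred_eq, ← Nat.frequently_atTop_iff_infinite] at hinf
  obtain ⟨q, ⟨hqQ, happrox⟩, hvq⟩ := (hinf.and_eventually hdvd).exists
  exact (hfree q (hQpos q hqQ)).mp hqQ v hv hvQ (hvq happrox)

theorem hyperplane_slice_subset_liminf_set
    (n : ℕ) (hn : 2 ≤ n) (τ : ℝ) (hτ : 1 < τ)
    (Q : Set ℕ) (hQpos : ∀ q ∈ Q, 0 < q)
    (hfree : ∀ q : ℕ, 0 < q → (q ∈ Q ↔ ∀ w : ℕ, 0 < w → w ∉ Q → ¬ w ∣ q))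
    (hne : Q ≠ {q : ℕ | 0 < q})
    (u v : ℕ) (hu : 0 < u) (hv : 0 < v) (hvQ : v ∉ Q) (huv : Nat.Coprime u v)
    (a : Fin n → ℕ) (ha : a ≠ 0)
    (W WQ : Set (Fin n → ℝ))
    (hW : W = {x : Fin n → ℝ |
      {q : ℕ | 0 < q ∧ ∃ p : Fin n → ℤ,
        ∀ i, |x i - (p i : ℝ) / (q : ℝ)| < 1 / (q : ℝ) ^ τ}.Infinite})
    (hWQ : WQ = {x : Fin n → ℝ |
      {q : ℕ | q ∈ Q ∧ ∃ p : Fin n → ℤ,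
        ∀ i, |x i - (p i : ℝ) / (q : ℝ)| < 1 / (q : ℝ) ^ τ}.Infinite}) :
    {x : Fin n → ℝ | ∑ i, (a i : ℝ) * x i = (u : ℝ) / (v : ℝ)} ∩ W ⊆ W \ WQ :=
  hyperplane_slice_subset_liminf_set_general n τ hτ Q hQpos hfree u v hv hvQ huv a W WQ hWQ
end

section
/- Let $\pi_0$ and $\pi_1$ be two distinct primes. Then there exist a sequence of positive integers $(a_s)_{s\ge1}$ and an increasing sequence of positive integers $(\alpha_s)_{s\ge1}$ with $\alpha_0=0$ such that the sequence defined by $q_0=1$, $q_1=a_1$, $q_s=a_s q_{s-1}+q_{s-2}$ satisfies $q_{2s}=\pi_0^{\alpha_{2s}}$ and $q_{2s+1}=\pi_1^{\alpha_{2s+1}}$ for all $s\ge0$. In other words, there is a continued fraction expansion all of whose convergent denominators (from index 1 on) are powers of $\pi_0$ or $\pi_1$ alternately. -/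
private def gseq (p q : ℕ) : ℕ → ℕ × ℕ
  | 0 => (0, 1)
  | s + 1 =>
    ((gseq p q s).2,
      (gseq p q s).1 + ((gseq p q s).2 + 1) *
        Nat.totient ((if s % 2 = 0 then q else p) ^ (gseq p q s).2))

private def Aseq (p q : ℕ) (s : ℕ) : ℕ := (gseq p q s).1
private def bfun (p q : ℕ) (s : ℕ) : ℕ := if s % 2 = 0 then p else q
private def Qseq (p q : ℕ) (s : ℕ) : ℕ := bfun p q s ^ Aseq p q s

private def aseq (p q : ℕ) : ℕ → ℕ
  | 0 => 1
  | 1 => Qseq p q 1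
  | (t+2) => (Qseq p q (t+2) - Qseq p q t) / Qseq p q (t+1)

private lemma A_zero (p q : ℕ) : Aseq p q 0 = 0 := rfl
private lemma A_one (p q : ℕ) : Aseq p q 1 = 1 := rfl

private lemma A_step (p q s : ℕ) :
    Aseq p q (s+2) = Aseq p q s + (Aseq p q (s+1) + 1) *
      Nat.totient (bfun p q (s+1) ^ Aseq p q (s+1)) := by
  have h : Aseq p q (s+2) = (gseq p q s).1 + ((gseq p q s).2 + 1) *
      Nat.totient ((if s % 2 = 0 then q else p) ^ (gseq p q s).2) := rfl
  have hA1 : Aseq p q (s+1) = (gseq p q s).2 := rfl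
  rw [h, hA1]
  have : (if s % 2 = 0 then q else p) = bfun p q (s+1) := by
    unfold bfun
    rcases Nat.mod_two_eq_zero_or_one s with hs | hs
    · have h1 : (s+1) % 2 = 1 := by omega
      simp [hs, h1]
    · have h1 : (s+1) % 2 = 0 := by omega
      simp [hs, h1]
  rw [this]
  rfl

private lemma b_prime {p q : ℕ} (hp : p.Prime) (hq : q.Prime) (s : ℕ) :
    (bfun p q s).Prime := by
  unfold bfun; split <;> assumption

private lemma b_succ_succ (p q s : ℕ) : bfun p q (s+2) = bfun p q s := by
  unfold bfun
  have : (s+2) % 2 = s % 2 := Nat.add_mod_right s 2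
  rw [this]

private lemma b_ne {p q : ℕ} (hne : p ≠ q) (s : ℕ) : bfun p q s ≠ bfun p q (s+1) := by
  unfold bfun
  rcases Nat.mod_two_eq_zero_or_one s with hs | hs
  · have h1 : (s+1) % 2 = 1 := by omega
    simp [hs, h1, hne]
  · have h1 : (s+1) % 2 = 0 := by omega
    simp only [hs, h1, if_false, if_true]
    · exact fun h => hne h.symm

private lemma A_lt {p q : ℕ} (hp : p.Prime) (hq : q.Prime) (s : ℕ) :
    Aseq p q s < Aseq p q (s+1) := by
  cases s with
  | zero => simp [A_zero, A_one]
  | succ t =>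
    have hstep := A_step p q t
    have hT : 0 < Nat.totient (bfun p q (t+1) ^ Aseq p q (t+1)) :=
      Nat.totient_pos.mpr (pow_pos (b_prime hp hq (t+1)).pos _)
    nlinarith [hstep, hT]

private lemma A_mono {p q : ℕ} (hp : p.Prime) (hq : q.Prime) :
    StrictMono (Aseq p q) := strictMono_nat_of_lt_succ (A_lt hp hq)

private lemma Q_dvd {p q : ℕ} (hp : p.Prime) (hq : q.Prime) (hne : p ≠ q) (s : ℕ) :
    Qseq p q (s+1) ∣ Qseq p q (s+2) - Qseq p q s := by
  set m := bfun p q (s+1) ^ Aseq p q (s+1) with hm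
  have hcop : (bfun p q s).Coprime m := by
    exact Nat.Coprime.pow_right _
      ((Nat.coprime_primes (b_prime hp hq s) (b_prime hp hq (s+1))).mpr (b_ne hne s))
  have h1 : bfun p q s ^ Nat.totient m ≡ 1 [MOD m] := Nat.ModEq.pow_totient hcop
  have h2 : bfun p q s ^ ((Aseq p q (s+1) + 1) * Nat.totient m) ≡ 1 [MOD m] := by
    have := h1.pow (Aseq p q (s+1) + 1)
    rw [one_pow] at this
    calc bfun p q s ^ ((Aseq p q (s+1) + 1) * Nat.totient m)
        = (bfun p q s ^ Nat.totient m) ^ (Aseq p q (s+1) + 1) := by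
          rw [← pow_mul, Nat.mul_comm]
      _ ≡ 1 [MOD m] := this
  have h3 : bfun p q s ^ Aseq p q (s+2) ≡ bfun p q s ^ Aseq p q s [MOD m] := by
    rw [A_step p q s, pow_add]
    calc bfun p q s ^ Aseq p q s * bfun p q s ^ ((Aseq p q (s+1) + 1) * Nat.totient m)
        ≡ bfun p q s ^ Aseq p q s * 1 [MOD m] := Nat.ModEq.mul_left _ h2
      _ = bfun p q s ^ Aseq p q s := by ring
  have hle : bfun p q s ^ Aseq p q s ≤ bfun p q s ^ Aseq p q (s+2) :=
    Nat.pow_le_pow_right (b_prime hp hq s).pos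
      (le_of_lt (lt_trans (A_lt hp hq s) (A_lt hp hq (s+1))))
  have := (Nat.modEq_iff_dvd' hle).mp h3.symm
  unfold Qseq
  rw [b_succ_succ p q s]
  exact this

private lemma Q_lt {p q : ℕ} (hp : p.Prime) (hq : q.Prime) (s : ℕ) :
    Qseq p q s < Qseq p q (s+2) := by
  unfold Qseq
  rw [b_succ_succ p q s]
  exact Nat.pow_lt_pow_right (b_prime hp hq s).one_lt
    (lt_trans (A_lt hp hq s) (A_lt hp hq (s+1)))

private lemma Q_pos {p q : ℕ} (hp : p.Prime) (hq : q.Prime) (s : ℕ) :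
    0 < Qseq p q s := pow_pos (b_prime hp hq s).pos _

theorem exists_cf_denominators_alternating_prime_powers
    (π₀ π₁ : ℕ) (h₀ : π₀.Prime) (h₁ : π₁.Prime) (hne : π₀ ≠ π₁) :
    ∃ (a : ℕ → ℕ) (α : ℕ → ℕ) (q : ℕ → ℕ),
      (∀ s, 1 ≤ s → 1 ≤ a s) ∧
      StrictMono α ∧ α 0 = 0 ∧
      q 0 = 1 ∧ q 1 = a 1 ∧
      (∀ s, 2 ≤ s → q s = a s * q (s - 1) + q (s - 2)) ∧
      (∀ s : ℕ, q (2 * s) = π₀ ^ α (2 * s) ∧ q (2 * s + 1) = π₁ ^ α (2 * s + 1)) := by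
  refine ⟨aseq π₀ π₁, Aseq π₀ π₁, Qseq π₀ π₁, ?_, A_mono h₀ h₁, A_zero π₀ π₁, ?_, rfl, ?_, ?_⟩
  · intro s hs
    match s, hs with
    | 1, _ =>
      show 1 ≤ Qseq π₀ π₁ 1
      exact Q_pos h₀ h₁ 1
    | (t+2), _ =>
      show 1 ≤ (Qseq π₀ π₁ (t+2) - Qseq π₀ π₁ t) / Qseq π₀ π₁ (t+1)
      rw [Nat.one_le_div_iff (Q_pos h₀ h₁ (t+1))]
      exact Nat.le_of_dvd (by have := Q_lt h₀ h₁ t; omega) (Q_dvd h₀ h₁ hne t)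
  · show Qseq π₀ π₁ 0 = 1
    unfold Qseq bfun
    simp [A_zero]
  · intro s hs
    obtain ⟨t, rfl⟩ : ∃ t, s = t + 2 := ⟨s - 2, by omega⟩
    have h1 : t + 2 - 1 = t + 1 := rfl
    have h2 : t + 2 - 2 = t := rfl
    rw [h1, h2]
    have hdvd := Q_dvd h₀ h₁ hne t
    have hmul : aseq π₀ π₁ (t+2) * Qseq π₀ π₁ (t+1) = Qseq π₀ π₁ (t+2) - Qseq π₀ π₁ t :=
      Nat.div_mul_cancel hdvd
    have hlt := Q_lt h₀ h₁ t
    omega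
  · intro s
    constructor
    · show bfun π₀ π₁ (2*s) ^ Aseq π₀ π₁ (2*s) = _
      unfold bfun
      simp [Nat.mul_mod_right]
    · show bfun π₀ π₁ (2*s+1) ^ Aseq π₀ π₁ (2*s+1) = _
      unfold bfun
      have : (2*s+1) % 2 = 1 := by omega
      simp [this]
end

section
/- Let $\Pi$ be a set of primes containing at least two distinct primes and let $\tau>2$. Then the set $W^*_{\tau}(\Pi)$ of real numbers $x$ such that $|x-p/q|<q^{-\tau}$ for infinitely many reduced fractions $p/q$ with $q$ divisible by some prime of $\Pi$, but only finitely many with $q$ coprime to all primes of $\Pi$, contains uncountably many Liouville numbers. -/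
/-!
Fix `P ∈ Π`. To a set `u ⊆ ℕ` attach `x_u = ∑ₖ P^(-mₖ)` with `m₀ = 1` and
`mₖ₊₁ = (k + 3) mₖ + [k ∈ u]`. The partial sums `aₖ / P^mₖ`, with `aₖ ≡ 1 (mod P)`, approximate
`x_u` within `2 P^(-mₖ₊₁) ≤ (P^mₖ)^(-(k+2))`: hence `x_u` is Liouville and the `P^mₖ` are
infinitely many good denominators divisible by `P`. Conversely, distinct fractions `p/q ≠ a/b`
are at distance at least `1/(qb)`, so once `q` is large, a fraction `p/q` with
`|x_u - p/q| < q^(-τ)`, `τ > 2`, must be `aₖ / P^mₖ` or `aₖ₊₁ / P^mₖ₊₁` for the `k` with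
`P^mₖ ≤ q < P^mₖ₊₁`; either way `P ∣ q`. Since `u ↦ x_u` is injective, there are uncountably
many such `x_u`.
-/

open Finset Filter

section GeometricDecay

variable {r : ℝ} {m : ℕ → ℕ}

lemma summable_pow_comp (hr₀ : 0 ≤ r) (hr₁ : r < 1) (hm : StrictMono m) :
    Summable fun k ↦ r ^ m k :=
  (summable_geometric_of_lt_one hr₀ hr₁).of_nonneg_of_le (fun _ ↦ pow_nonneg hr₀ _)
    fun k ↦ pow_le_pow_of_le_one hr₀ hr₁.le (hm.id_le k)

lemma summable_pow_comp_add (hr₀ : 0 ≤ r) (hr₁ : r < 1) (hm : StrictMono m) (n : ℕ) :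
    Summable fun j ↦ r ^ m (j + n) :=
  (summable_nat_add_iff n).2 (summable_pow_comp hr₀ hr₁ hm)

lemma tsum_pow_comp_add_le (hr₀ : 0 ≤ r) (hr : r ≤ 1 / 2) (hm : StrictMono m) (n : ℕ) :
    ∑' j, r ^ m (j + n) ≤ 2 * r ^ m n := by
  have hr₁ : r ≤ 1 := hr.trans (by norm_num)
  calc ∑' j, r ^ m (j + n) ≤ ∑' j, r ^ m n * (1 / 2) ^ j := by
        refine (summable_pow_comp_add hr₀ (by linarith) hm n).tsum_le_tsum (fun j ↦ ?_)
          (summable_geometric_two.mul_left _)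
        calc r ^ m (j + n) ≤ r ^ (m n + j) :=
              pow_le_pow_of_le_one hr₀ hr₁ (by simpa [add_comm] using hm.add_le_nat j n)
          _ = r ^ m n * r ^ j := pow_add _ _ _
          _ ≤ r ^ m n * (1 / 2) ^ j := by gcongr
    _ = 2 * r ^ m n := by rw [tsum_mul_left, tsum_geometric_two, mul_comm]

lemma pow_lt_tsum_pow_comp_add (hr₀ : 0 < r) (hr₁ : r < 1) (hm : StrictMono m) (n : ℕ) :
    r ^ m n < ∑' j, r ^ m (j + n) := by
  have hs := summable_pow_comp_add hr₀.le hr₁ hm n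
  rw [hs.tsum_eq_zero_add, zero_add, lt_add_iff_pos_right]
  exact ((summable_nat_add_iff 1).2 hs).tsum_pos (fun _ ↦ by positivity) 0 (by positivity)

lemma eq_of_pow_lt_le_two_mul_pow (hr₀ : 0 ≤ r) (hr : r ≤ 1 / 2) {i j : ℕ} {T : ℝ}
    (hi : r ^ i < T ∧ T ≤ 2 * r ^ i) (hj : r ^ j < T ∧ T ≤ 2 * r ^ j) : i = j := by
  have key : ∀ {i j : ℕ}, i < j → 2 * r ^ j ≤ r ^ i := fun {i j} h ↦ by
    have := pow_le_pow_of_le_one hr₀ (hr.trans (by norm_num)) (show i + 1 ≤ j from h)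
    rw [pow_succ] at this
    nlinarith [pow_nonneg hr₀ i]
  rcases lt_trichotomy i j with h | h | h
  · linarith [key h]
  · exact h
  · linarith [key h]

end GeometricDecay

section LacunarySeries

variable {P : ℕ} {m : ℕ → ℕ}

noncomputable def lacunarySeries (P : ℕ) (m : ℕ → ℕ) : ℝ := ∑' k, (P : ℝ)⁻¹ ^ m k

def lacunaryNumerator (P : ℕ) (m : ℕ → ℕ) (n : ℕ) : ℕ := ∑ k ∈ range (n + 1), P ^ (m n - m k)

lemma inv_natCast_le_half (hP : 2 ≤ P) : (P : ℝ)⁻¹ ≤ 1 / 2 := by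
  rw [one_div]; exact inv_anti₀ two_pos (by exact_mod_cast hP)

lemma inv_natCast_pos (hP : 2 ≤ P) : 0 < (P : ℝ)⁻¹ := by positivity

lemma summable_inv_natCast_pow_comp (hP : 2 ≤ P) (hm : StrictMono m) :
    Summable fun k ↦ (P : ℝ)⁻¹ ^ m k :=
  summable_pow_comp (inv_natCast_pos hP).le (by linarith [inv_natCast_le_half hP]) hm

lemma lacunaryNumerator_div_pow (hP : P ≠ 0) (hm : Monotone m) (n : ℕ) :
    (lacunaryNumerator P m n : ℝ) / (P : ℝ) ^ m n = ∑ k ∈ range (n + 1), (P : ℝ)⁻¹ ^ m k := by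
  rw [lacunaryNumerator, Nat.cast_sum, sum_div]
  refine sum_congr rfl fun k hk ↦ ?_
  have hkn : m k ≤ m n := hm (Nat.lt_succ_iff.1 (mem_range.1 hk))
  rw [Nat.cast_pow, pow_sub₀ _ (Nat.cast_ne_zero.2 hP) hkn, inv_pow]
  field_simp

lemma coprime_lacunaryNumerator (hm : StrictMono m) (n : ℕ) :
    (lacunaryNumerator P m n).Coprime P := by
  have hdvd : P ∣ ∑ k ∈ range n, P ^ (m n - m k) :=
    dvd_sum fun k hk ↦ dvd_pow_self P (Nat.sub_ne_zero_of_lt (hm (mem_range.1 hk)))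
  obtain ⟨c, hc⟩ := hdvd
  rw [lacunaryNumerator, sum_range_succ, hc, Nat.sub_self, pow_zero, add_comm,
    Nat.coprime_add_mul_left_left]
  exact Nat.coprime_one_left P

lemma lacunarySeries_sub_div_pow (hP : 2 ≤ P) (hm : StrictMono m) (n : ℕ) :
    lacunarySeries P m - lacunaryNumerator P m n / (P : ℝ) ^ m n =
      ∑' j, (P : ℝ)⁻¹ ^ m (j + (n + 1)) := by
  rw [lacunaryNumerator_div_pow (by omega) hm.monotone, lacunarySeries,
    ← (summable_inv_natCast_pow_comp hP hm).sum_add_tsum_nat_add (n + 1)]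
  ring

lemma lacunarySeries_sub_div_pow_pos (hP : 2 ≤ P) (hm : StrictMono m) (n : ℕ) :
    0 < lacunarySeries P m - lacunaryNumerator P m n / (P : ℝ) ^ m n := by
  rw [lacunarySeries_sub_div_pow hP hm]
  exact (pow_pos (inv_natCast_pos hP) _).trans
    (pow_lt_tsum_pow_comp_add (inv_natCast_pos hP) (by linarith [inv_natCast_le_half hP]) hm _)

lemma lacunarySeries_sub_div_pow_le (hP : 2 ≤ P) (hm : StrictMono m) (n : ℕ) :
    lacunarySeries P m - lacunaryNumerator P m n / (P : ℝ) ^ m n ≤ 2 / (P : ℝ) ^ m (n + 1) := by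
  rw [lacunarySeries_sub_div_pow hP hm, div_eq_mul_inv, ← inv_pow]
  exact tsum_pow_comp_add_le (inv_natCast_pos hP).le (inv_natCast_le_half hP) hm _

lemma lacunarySeries_injOn (hP : 2 ≤ P) : Set.InjOn (lacunarySeries P) {m | StrictMono m} := by
  intro m hm m' hm' h
  have hr₀ := inv_natCast_pos hP
  have hr := inv_natCast_le_half hP
  have hr₁ : (P : ℝ)⁻¹ < 1 := by linarith
  funext k
  induction k using Nat.strong_induction_on with
  | _ k ih =>
    have htail : ∑' j, (P : ℝ)⁻¹ ^ m (j + k) = ∑' j, (P : ℝ)⁻¹ ^ m' (j + k) := by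
      have hsum := (summable_inv_natCast_pow_comp hP hm).sum_add_tsum_nat_add k
      have hsum' := (summable_inv_natCast_pow_comp hP hm').sum_add_tsum_nat_add k
      rw [sum_congr rfl fun j hj ↦ by rw [ih j (mem_range.1 hj)]] at hsum
      simp only [lacunarySeries] at h
      linarith
    refine eq_of_pow_lt_le_two_mul_pow hr₀.le hr
      ⟨pow_lt_tsum_pow_comp_add hr₀ hr₁ hm k, tsum_pow_comp_add_le hr₀.le hr hm k⟩ ?_
    rw [htail]
    exact ⟨pow_lt_tsum_pow_comp_add hr₀ hr₁ hm' k, tsum_pow_comp_add_le hr₀.le hr hm' k⟩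

end LacunarySeries

section CodeExponent

/-- The bit `k ∈ u` is stored in the `+ 1` of the exponent; the factor `k + 3` makes the series
lacunary enough to be Liouville. -/
noncomputable def codeExponent (u : Set ℕ) : ℕ → ℕ
  | 0 => 1
  | k + 1 => (k + 3) * codeExponent u k + u.indicator 1 k

variable (u : Set ℕ)

lemma codeExponent_pos (k : ℕ) : 0 < codeExponent u k := by
  induction k with
  | zero => simp [codeExponent]
  | succ k ih => simp only [codeExponent]; positivity

lemma mul_codeExponent_le (k : ℕ) : (k + 3) * codeExponent u k ≤ codeExponent u (k + 1) :=
  Nat.le_add_right _ _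

lemma codeExponent_strictMono : StrictMono (codeExponent u) :=
  strictMono_nat_of_lt_succ fun k ↦ by
    have := codeExponent_pos u k
    nlinarith [mul_codeExponent_le u k]

lemma codeExponent_injective : Function.Injective codeExponent := by
  intro u v h
  refine Set.indicator_one_inj ℕ (funext fun k ↦ ?_)
  have hk := congrFun h (k + 1)
  simp only [codeExponent, congrFun h k] at hk
  exact Nat.add_left_cancel hk

end CodeExponent

section RationalApproximation

lemma StrictMono.exists_le_lt_succ {b : ℕ → ℕ} (hb : StrictMono b) {q : ℕ} (hq : b 0 ≤ q) :
    ∃ k, b k ≤ q ∧ q < b (k + 1) := by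
  have hex : ∃ k, q < b (k + 1) := ⟨q, Nat.lt_of_lt_of_le q.lt_succ_self (hb.id_le _)⟩
  refine ⟨Nat.find hex, ?_, Nat.find_spec hex⟩
  cases hk : Nat.find hex with
  | zero => exact hq
  | succ k => exact not_lt.1 (Nat.find_min hex (hk ▸ k.lt_succ_self))

lemma div_eq_div_of_abs_sub_add_abs_sub_lt {x : ℝ} {p a : ℤ} {q b : ℕ} (hq : 0 < q) (hb : 0 < b)
    (h : |x - p / q| + |x - a / b| < 1 / (q * b)) : (p : ℝ) / q = a / b := by
  by_contra hne
  have hq' : (0 : ℝ) < q := by exact_mod_cast hq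
  have hb' : (0 : ℝ) < b := by exact_mod_cast hb
  have hnum : p * b - q * a ≠ 0 := by
    intro h0
    apply hne
    rw [div_eq_div_iff hq'.ne' hb'.ne']
    exact_mod_cast (sub_eq_zero.1 h0).trans (mul_comm _ _)
  have hgap : 1 / (q * b : ℝ) ≤ |(p : ℝ) / q - a / b| := by
    rw [div_sub_div _ _ hq'.ne' hb'.ne', abs_div, abs_of_pos (by positivity : (0 : ℝ) < q * b)]
    gcongr
    exact_mod_cast Int.one_le_abs hnum
  linarith [abs_sub_le ((p : ℝ) / q) x (a / b), abs_sub_comm x (p / q)]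

lemma dvd_of_div_eq_div {p a : ℤ} {q b : ℕ} (hq : q ≠ 0) (hb : b ≠ 0) (hab : Int.gcd a b = 1)
    (h : (p : ℝ) / q = a / b) : b ∣ q := by
  rw [div_eq_div_iff (by exact_mod_cast hq) (by exact_mod_cast hb)] at h
  have h' : (b : ℤ) ∣ a * q := ⟨p, by exact_mod_cast (h.symm.trans (mul_comm _ _))⟩
  exact Int.natCast_dvd_natCast.1 (Int.dvd_of_dvd_mul_right_of_gcd_one h' (by rwa [Int.gcd_comm]))

lemma one_div_rpow_le {q c τ : ℝ} (hq : 0 < q) (hc : 0 < c) (h : 2 * c ≤ q * q ^ (τ - 2)) :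
    1 / q ^ τ ≤ 1 / (2 * q * c) := by
  have hsplit : q ^ τ = q * (q * q ^ (τ - 2)) := by
    rw [← mul_assoc, ← sq, ← Real.rpow_two, ← Real.rpow_add hq]
    ring_nf
  exact one_div_le_one_div_of_le (by positivity) (by rw [hsplit]; nlinarith)

lemma eight_mul_le_rpow {β q ε : ℝ} {k : ℕ} (hβ : 2 ≤ β) (hε : 0 < ε) (hk : 4 / ε ≤ k)
    (hq : β ^ k ≤ q) : 8 * β ≤ q ^ ε := by
  have h4 : (4 : ℝ) ≤ k * ε := by rwa [div_le_iff₀ hε] at hk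
  calc 8 * β ≤ β ^ (4 : ℝ) := by
        rw [show (4 : ℝ) = (4 : ℕ) by norm_num, Real.rpow_natCast]
        nlinarith [mul_le_mul hβ hβ (by norm_num) (by linarith)]
    _ ≤ β ^ ((k : ℝ) * ε) := Real.rpow_le_rpow_of_exponent_le (by linarith) h4
    _ = (β ^ k) ^ ε := by rw [Real.rpow_mul (by linarith), Real.rpow_natCast]
    _ ≤ q ^ ε := Real.rpow_le_rpow (by positivity) hq hε.le

end RationalApproximation

def approxDenominators (x τ : ℝ) : Set ℕ :=
  {q | 0 < q ∧ ∃ p : ℤ, Int.gcd p q = 1 ∧ |x - p / q| < 1 / (q : ℝ) ^ τ}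

structure IsRapidApproximation (x : ℝ) (a : ℕ → ℤ) (b : ℕ → ℕ) : Prop where
  two_le : ∀ k, 2 ≤ b k
  pow_le : ∀ k, b k ^ (k + 3) ≤ b (k + 1)
  abs_sub_le : ∀ k, |x - a k / b k| ≤ 2 / b (k + 1)

namespace IsRapidApproximation

variable {x : ℝ} {a : ℕ → ℤ} {b : ℕ → ℕ}

lemma two_le_cast (h : IsRapidApproximation x a b) (k : ℕ) : (2 : ℝ) ≤ b k := by
  exact_mod_cast h.two_le k

lemma strictMono (h : IsRapidApproximation x a b) : StrictMono b :=
  strictMono_nat_of_lt_succ fun k ↦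
    (lt_self_pow₀ (h.two_le k) (by omega)).trans_le (h.pow_le k)

lemma abs_sub_le_one_div_pow (h : IsRapidApproximation x a b) (k : ℕ) :
    |x - a k / b k| ≤ 1 / (b k : ℝ) ^ (k + 2) := by
  have hβ := h.two_le_cast k
  calc |x - a k / b k| ≤ 2 / b (k + 1) := h.abs_sub_le k
    _ ≤ 2 / (b k : ℝ) ^ (k + 3) := by
        gcongr
        exact_mod_cast h.pow_le k
    _ = 2 / b k * (1 / (b k : ℝ) ^ (k + 2)) := by rw [pow_succ]; field_simp
    _ ≤ 1 / (b k : ℝ) ^ (k + 2) := by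
        apply mul_le_of_le_one_left (by positivity)
        rw [div_le_one (by positivity)]
        exact hβ

lemma liouville (h : IsRapidApproximation x a b) (hne : ∀ k, x ≠ a k / b k) : Liouville x := by
  intro n
  have hβ := h.two_le_cast n
  refine ⟨a n, b n, by exact_mod_cast h.two_le n, by exact_mod_cast hne n, ?_⟩
  push_cast
  calc |x - a n / b n| ≤ 1 / (b n : ℝ) ^ (n + 2) := h.abs_sub_le_one_div_pow n
    _ < 1 / (b n : ℝ) ^ n :=
        one_div_lt_one_div_of_lt (by positivity) (pow_lt_pow_right₀ (by linarith) (by omega))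

lemma infinite_approxDenominators_inter_range (h : IsRapidApproximation x a b)
    (hcop : ∀ k, Int.gcd (a k) (b k) = 1) (τ : ℝ) :
    (approxDenominators x τ ∩ Set.range b).Infinite := by
  set K := ⌈τ⌉₊
  refine Set.infinite_of_injective_forall_mem (f := fun k ↦ b (k + K))
    (fun i j hij ↦ by simpa using h.strictMono.injective hij)
    fun k ↦ ⟨⟨by linarith [h.two_le (k + K)], a (k + K), hcop _, ?_⟩, k + K, rfl⟩
  have hβ := h.two_le_cast (k + K)
  have hτ : τ < ((k + K + 2 : ℕ) : ℝ) := by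
    have := Nat.le_ceil τ
    push_cast
    linarith [(k.cast_nonneg : (0 : ℝ) ≤ k)]
  calc |x - a (k + K) / b (k + K)| ≤ 1 / (b (k + K) : ℝ) ^ (k + K + 2) :=
        h.abs_sub_le_one_div_pow _
    _ < 1 / (b (k + K) : ℝ) ^ τ := by
        rw [← Real.rpow_natCast]
        exact one_div_lt_one_div_of_lt (by positivity)
          (Real.rpow_lt_rpow_of_exponent_lt (by linarith) hτ)

lemma div_eq_of_abs_sub_lt (h : IsRapidApproximation x a b) {τ : ℝ} {q : ℕ} {p : ℤ} {j : ℕ}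
    (hq : 0 < q) (hp : |x - p / q| < 1 / (q : ℝ) ^ τ)
    (h₁ : 2 * (b j : ℝ) ≤ q * (q : ℝ) ^ (τ - 2)) (h₂ : 4 * q * b j ≤ b (j + 1)) :
    (p : ℝ) / q = a j / b j := by
  have hβ : (0 : ℝ) < b j := by linarith [h.two_le_cast j]
  have hq' : (0 : ℝ) < q := by exact_mod_cast hq
  have h₂' : (4 * q * b j : ℝ) ≤ b (j + 1) := by exact_mod_cast h₂
  have happrox : |x - a j / b j| ≤ 1 / (2 * q * b j) :=
    (h.abs_sub_le j).trans (by
      rw [div_le_div_iff₀ (by linarith [h.two_le_cast (j + 1)]) (by positivity)]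
      linarith)
  refine div_eq_div_of_abs_sub_add_abs_sub_lt (x := x) hq (by linarith [h.two_le j]) ?_
  calc |x - p / q| + |x - a j / b j| < 1 / (2 * q * b j) + 1 / (2 * q * b j) :=
        add_lt_add_of_lt_of_le (hp.trans_le (one_div_rpow_le hq' hβ h₁)) happrox
    _ = 1 / (q * b j) := by field_simp; ring

lemma pow_le_of_le_four_mul (h : IsRapidApproximation x a b) {q k : ℕ}
    (hk : b (k + 1) ≤ 4 * q * b k) : b k ^ k ≤ q := by
  have hβ := h.two_le k
  refine Nat.le_of_mul_le_mul_right ?_ (show 0 < 4 * b k by omega)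
  calc b k ^ k * (4 * b k) ≤ b k ^ k * (b k ^ 2 * b k) := by gcongr; nlinarith
    _ = b k ^ (k + 3) := by ring
    _ ≤ 4 * q * b k := (h.pow_le k).trans hk
    _ = q * (4 * b k) := by ring

lemma four_mul_le_of_le (h : IsRapidApproximation x a b) {q j : ℕ} (hq : q ≤ b (j + 1)) :
    4 * q * b (j + 1) ≤ b (j + 2) := by
  have hβ := h.two_le (j + 1)
  calc 4 * q * b (j + 1) ≤ b (j + 1) ^ 2 * b (j + 1) * b (j + 1) := by gcongr; nlinarith
    _ = b (j + 1) ^ 4 := by ring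
    _ ≤ b (j + 1) ^ (j + 1 + 3) := Nat.pow_le_pow_right (by omega) (by omega)
    _ ≤ b (j + 2) := h.pow_le (j + 1)

lemma eventually_exists_div_eq (h : IsRapidApproximation x a b) {τ : ℝ} (hτ : 2 < τ) :
    ∀ᶠ q : ℕ in atTop, ∀ p : ℤ, |x - p / q| < 1 / (q : ℝ) ^ τ → ∃ k, (p : ℝ) / q = a k / b k := by
  set K := ⌈4 / (τ - 2)⌉₊
  have hlarge : ∀ᶠ q : ℕ in atTop, (2 : ℝ) ≤ (q : ℝ) ^ (τ - 2) :=
    ((tendsto_rpow_atTop (by linarith)).comp tendsto_natCast_atTop_atTop).eventually_ge_atTop 2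
  filter_upwards [hlarge, eventually_ge_atTop (b K)] with q hq₂ hqK p hp
  -- With `b k ≤ q < b (k + 1)`: if `b (k + 1)` is far beyond `q b k`, then `p / q = a k / b k`;
  -- otherwise `q ≥ b k ^ k` is so large that `p / q = a (k + 1) / b (k + 1)`.
  obtain ⟨k, hkq, hqk⟩ :=
    h.strictMono.exists_le_lt_succ ((h.strictMono.monotone K.zero_le).trans hqK)
  have hKk : K ≤ k := by
    by_contra hkK
    exact absurd ((h.strictMono.monotone (by omega : k + 1 ≤ K)).trans hqK) (not_le.2 hqk)
  have hq : 0 < q := by linarith [h.two_le k]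
  have hkq' : (b k : ℝ) ≤ q := by exact_mod_cast hkq
  by_cases hcase : 4 * q * b k < b (k + 1)
  · exact ⟨k, h.div_eq_of_abs_sub_lt hq hp (by nlinarith) hcase.le⟩
  · refine ⟨k + 1, h.div_eq_of_abs_sub_lt hq hp ?_ (h.four_mul_le_of_le hqk.le)⟩
    have hk : (b (k + 1) : ℝ) ≤ 4 * q * b k := by exact_mod_cast not_lt.1 hcase
    have h8 : 8 * (b k : ℝ) ≤ (q : ℝ) ^ (τ - 2) :=
      eight_mul_le_rpow (h.two_le_cast k) (by linarith)
        ((Nat.le_ceil _).trans (by exact_mod_cast hKk))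
        (by exact_mod_cast h.pow_le_of_le_four_mul (not_lt.1 hcase))
    nlinarith

lemma finite_approxDenominators_not_dvd (h : IsRapidApproximation x a b)
    (hcop : ∀ k, Int.gcd (a k) (b k) = 1) {τ : ℝ} (hτ : 2 < τ) :
    {q ∈ approxDenominators x τ | ∀ k, ¬ b k ∣ q}.Finite := by
  have hev := h.eventually_exists_div_eq hτ
  rw [← Nat.cofinite_eq_atTop] at hev
  refine (Filter.eventually_cofinite.1 hev).subset ?_
  rintro q ⟨⟨hq, p, -, hp⟩, hndvd⟩ hq'
  obtain ⟨k, hk⟩ := hq' p hp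
  exact hndvd k (dvd_of_div_eq_div hq.ne' (by linarith [h.two_le k]) (hcop k) hk)

end IsRapidApproximation

section LiminfSet

variable {P : ℕ} {m : ℕ → ℕ}

/-- The set `W*_τ(Π)`, for `Π = S`. -/
def liminfSet (S : Set ℕ) (τ : ℝ) : Set ℝ :=
  {x | {q ∈ approxDenominators x τ | ∃ π ∈ S, π ∣ q}.Infinite ∧
    {q ∈ approxDenominators x τ | ∀ π ∈ S, ¬ π ∣ q}.Finite}

lemma isRapidApproximation_lacunarySeries (hP : 2 ≤ P) (hm : StrictMono m) (hm₀ : 0 < m 0)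
    (hgrowth : ∀ k, (k + 3) * m k ≤ m (k + 1)) :
    IsRapidApproximation (lacunarySeries P m) (fun k ↦ lacunaryNumerator P m k)
      (fun k ↦ P ^ m k) where
  two_le k := hP.trans (Nat.le_self_pow (by have := hm.monotone k.zero_le; omega) P)
  pow_le k := by rw [← pow_mul, mul_comm]; exact Nat.pow_le_pow_right (by omega) (hgrowth k)
  abs_sub_le k := by
    push_cast
    rw [abs_of_pos (lacunarySeries_sub_div_pow_pos hP hm k)]
    exact lacunarySeries_sub_div_pow_le hP hm k

lemma gcd_lacunaryNumerator_pow (hm : StrictMono m) (k : ℕ) :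
    Int.gcd (lacunaryNumerator P m k) ((P ^ m k : ℕ) : ℤ) = 1 := by
  rw [Int.gcd_natCast_natCast]
  exact (coprime_lacunaryNumerator hm k).pow_right _

lemma liouville_lacunarySeries (hP : 2 ≤ P) (hm : StrictMono m) (hm₀ : 0 < m 0)
    (hgrowth : ∀ k, (k + 3) * m k ≤ m (k + 1)) : Liouville (lacunarySeries P m) :=
  (isRapidApproximation_lacunarySeries hP hm hm₀ hgrowth).liouville fun k ↦ by
    push_cast
    exact (sub_pos.1 (lacunarySeries_sub_div_pow_pos hP hm k)).ne'

lemma lacunarySeries_mem_liminfSet {S : Set ℕ} (hP : 2 ≤ P) (hPS : P ∈ S) (hm : StrictMono m)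
    (hm₀ : 0 < m 0) (hgrowth : ∀ k, (k + 3) * m k ≤ m (k + 1)) {τ : ℝ} (hτ : 2 < τ) :
    lacunarySeries P m ∈ liminfSet S τ := by
  have h := isRapidApproximation_lacunarySeries hP hm hm₀ hgrowth
  have hdvd : ∀ k, P ∣ P ^ m k := fun k ↦ dvd_pow_self P (by have := hm.monotone k.zero_le; omega)
  constructor
  · refine (h.infinite_approxDenominators_inter_range (gcd_lacunaryNumerator_pow hm) τ).mono ?_
    rintro q ⟨hq, k, rfl⟩
    exact ⟨hq, P, hPS, hdvd k⟩
  · refine (h.finite_approxDenominators_not_dvd (gcd_lacunaryNumerator_pow hm) hτ).subset ?_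
    rintro q ⟨hq, hndvd⟩
    exact ⟨hq, fun k hk ↦ hndvd P hPS ((hdvd k).trans hk)⟩

end LiminfSet

theorem liminf_set_contains_uncountably_many_liouville
    (Pr : Set ℕ) (hPr : ∀ p ∈ Pr, p.Prime)
    (htwo : ∃ p q, p ∈ Pr ∧ q ∈ Pr ∧ p ≠ q)
    (τ : ℝ) (hτ : 2 < τ)
    (Wstar : Set ℝ)
    (hWstar : Wstar = {x : ℝ |
      {q : ℕ | 0 < q ∧ (∃ p : ℤ, Int.gcd p (q : ℤ) = 1 ∧
          |x - (p : ℝ) / (q : ℝ)| < 1 / (q : ℝ) ^ τ) ∧ ∃ π ∈ Pr, π ∣ q}.Infinite ∧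
      {q : ℕ | 0 < q ∧ (∃ p : ℤ, Int.gcd p (q : ℤ) = 1 ∧
          |x - (p : ℝ) / (q : ℝ)| < 1 / (q : ℝ) ^ τ) ∧ ∀ π ∈ Pr, ¬ π ∣ q}.Finite}) :
    ¬ {x : ℝ | x ∈ Wstar ∧ Liouville x}.Countable := by
  obtain ⟨P, -, hP, -, -⟩ := htwo
  have hP₂ := (hPr P hP).two_le
  have hWstar' : Wstar = liminfSet Pr τ := by
    subst hWstar
    simp only [liminfSet, approxDenominators, Set.sep_ofPred, and_assoc]
  set f : Set ℕ → ℝ := fun u ↦ lacunarySeries P (codeExponent u)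
  have hf : Function.Injective f := fun u v huv ↦ codeExponent_injective
    (lacunarySeries_injOn hP₂ (codeExponent_strictMono u) (codeExponent_strictMono v) huv)
  have hmem : ∀ u, f u ∈ {x : ℝ | x ∈ Wstar ∧ Liouville x} := fun u ↦
    ⟨hWstar' ▸ lacunarySeries_mem_liminfSet hP₂ hP (codeExponent_strictMono u)
        (codeExponent_pos u 0) (mul_codeExponent_le u) hτ,
      liouville_lacunarySeries hP₂ (codeExponent_strictMono u) (codeExponent_pos u 0)
        (mul_codeExponent_le u)⟩
  intro hcount
  have : Countable (Set ℕ) :=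
    Set.countable_univ_iff.1 (Set.eq_univ_of_forall hmem ▸ hcount.preimage hf)
  obtain ⟨g, hg⟩ := this.exists_injective_nat
  exact Function.cantor_injective g hg
end

section
/- Let $x$ be an irrational real number, $p\in\mathbb{Z}$, $q\in\mathbb{N}^*$ with $|x - p/q| < 1/(2q^2)$. Then $p/q$ is a convergent of the continued fraction expansion of $x$, i.e., there exists $s\ge0$ with $p/q = p_s/q_s$. -/
theorem legendre_criterion (x : ℝ) (hx : Irrational x) (p : ℤ) (q : ℕ) (hq : 0 < q)
    (h : |x - (p : ℝ) / (q : ℝ)| < 1 / (2 * (q : ℝ) ^ 2)) :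
    ∃ s : ℕ, (p : ℝ) / (q : ℝ) = (GenContFract.of x).convs s := by
  set r : ℚ := (p : ℚ) / (q : ℚ) with hr
  have hrr : ((r : ℚ) : ℝ) = (p : ℝ) / (q : ℝ) := by push_cast [hr]; ring
  have hden : (r.den : ℤ) ∣ (q : ℤ) := by
    have : r = Rat.divInt p (q : ℤ) := by rw [hr, Rat.divInt_eq_div]; push_cast; ring
    rw [this]; exact Rat.den_dvd p q
  have hdenle : (r.den : ℝ) ≤ (q : ℝ) := by
    have := Int.le_of_dvd (by exact_mod_cast hq) hden
    exact_mod_cast this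
  have hdpos : (0 : ℝ) < (r.den : ℝ) := by exact_mod_cast r.pos
  have h' : |x - (r : ℝ)| < 1 / (2 * (r.den : ℝ) ^ 2) := by
    rw [hrr]
    refine h.trans_le ?_
    apply one_div_le_one_div_of_le
    · positivity
    · have : (r.den : ℝ) ^ 2 ≤ (q : ℝ) ^ 2 := by
        apply pow_le_pow_left₀ hdpos.le hdenle
      linarith
  obtain ⟨n, hn⟩ := Real.exists_convs_eq_rat h'
  exact ⟨n, by rw [← hrr, hn]⟩
end
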